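/- arXiv:2508.11650 — 2 statements merged into one kernel-verified Lean document; each statement's English description precedes it below -/
import Mathlib

section
/- For every natural number n ≥ 0, the Gaussian third-order Jacobsthal number satisfies the Binet formula Jg(n) = (1/7)·[ (1 + i/2)·2^(n+1) + (1 - 3i)·Ω(n) - (2 + i)·Ω(n+1) ]. -/
/-!
The characteristic polynomial of the recurrence is `X³ - X² - X - 2 = (X - 2)(X² + X + 1)`.
Its root `2` gives the solution `2ⁿ`, and the primitive cube roots of unity give the
3-periodic solutions with zero sum over a period, spanned by `Ω(n)` and `Ω(n + 1)`.
The right-hand side of the Binet formula is therefore a solution, and it agrees with `Jg`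
at `n = 0, 1, 2`; a solution of an order-3 recurrence is determined by these values.
-/

/-- Ω(n) = 0, 1, -1 according as n ≡ 0, 1, 2 (mod 3). -/
def Omg (n : ℕ) : ℤ := if n % 3 = 0 then 0 else if n % 3 = 1 then 1 else -1

namespace LinearRecurrence

variable {R : Type*} [CommSemiring R] {E : LinearRecurrence R}

theorem IsSolution.comp_add_right {u : ℕ → R} (hu : E.IsSolution u) (k : ℕ) :
    E.IsSolution fun n ↦ u (n + k) := fun n ↦ by
  simpa only [add_right_comm] using hu (n + k)

end LinearRecurrence

def thirdOrderJacobsthalRec (R : Type*) [CommSemiring R] : LinearRecurrence R :=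
  ⟨3, ![2, 1, 1]⟩

section ThirdOrderJacobsthal

variable {R : Type*}

theorem isSolution_thirdOrderJacobsthalRec_iff [CommSemiring R] {u : ℕ → R} :
    (thirdOrderJacobsthalRec R).IsSolution u ↔
      ∀ n, u (n + 3) = u (n + 2) + u (n + 1) + 2 * u n := by
  show (∀ n, u (n + 3) = ∑ i : Fin 3, ![2, 1, 1] i * u (n + i)) ↔ _
  refine forall_congr' fun n ↦ ?_
  simp only [Fin.sum_univ_three, Fin.isValue, Matrix.cons_val_zero,
    Fin.coe_ofNat_eq_mod, Nat.zero_mod, add_zero, Matrix.cons_val_one, Nat.one_mod, one_mul,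
    Matrix.cons_val, Nat.mod_succ]
  exact iff_of_eq (congrArg (u (n + 3) = ·) (by ring))

theorem isSolution_thirdOrderJacobsthalRec_two_pow [CommSemiring R] :
    (thirdOrderJacobsthalRec R).IsSolution fun n ↦ (2 : R) ^ n :=
  isSolution_thirdOrderJacobsthalRec_iff.mpr fun n ↦ by ring

theorem Omg_add_three (n : ℕ) : Omg (n + 3) = Omg n := by
  simp [Omg]

theorem Omg_add_Omg_add_one_add_Omg_add_two (n : ℕ) :
    Omg n + Omg (n + 1) + Omg (n + 2) = 0 := by
  rcases (by omega : n % 3 = 0 ∨ n % 3 = 1 ∨ n % 3 = 2) with h | h | h <;>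
    simp [Omg, Nat.add_mod, h]

theorem isSolution_thirdOrderJacobsthalRec_Omg [CommRing R] :
    (thirdOrderJacobsthalRec R).IsSolution fun n ↦ (Omg n : R) := by
  refine isSolution_thirdOrderJacobsthalRec_iff.mpr fun n ↦ ?_
  have hsum : (Omg n : R) + Omg (n + 1) + Omg (n + 2) = 0 := by
    rw [← Int.cast_add, ← Int.cast_add, Omg_add_Omg_add_one_add_Omg_add_two, Int.cast_zero]
  rw [Omg_add_three]
  linear_combination -hsum

theorem isSolution_thirdOrderJacobsthalRec_linearCombination [CommRing R] (a b c : R) :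
    (thirdOrderJacobsthalRec R).IsSolution fun n ↦ a * 2 ^ n + b * Omg n + c * Omg (n + 1) := by
  have mem {u : ℕ → R} := (LinearRecurrence.is_sol_iff_mem_solSpace (thirdOrderJacobsthalRec R) u).mp
  rw [LinearRecurrence.is_sol_iff_mem_solSpace]
  exact add_mem (add_mem (Submodule.smul_mem _ a (mem isSolution_thirdOrderJacobsthalRec_two_pow))
    (Submodule.smul_mem _ b (mem isSolution_thirdOrderJacobsthalRec_Omg)))
    (Submodule.smul_mem _ c (mem (isSolution_thirdOrderJacobsthalRec_Omg.comp_add_right 1)))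

end ThirdOrderJacobsthal

theorem binet_gaussian_third_order_jacobsthal
    (Jg : ℕ → ℂ)
    (h0 : Jg 0 = 0)
    (h1 : Jg 1 = 1)
    (h2 : Jg 2 = 1 + Complex.I)
    (hrec : ∀ n : ℕ, Jg (n + 3) = Jg (n + 2) + Jg (n + 1) + 2 * Jg n) :
    ∀ n : ℕ,
      Jg n = (1 / 7 : ℂ) *
        ((1 + Complex.I / 2) * 2 ^ (n + 1)
          + (1 - 3 * Complex.I) * (Omg n : ℂ)
          - (2 + Complex.I) * (Omg (n + 1) : ℂ)) := by
  have hJg : (thirdOrderJacobsthalRec ℂ).IsSolution Jg :=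
    isSolution_thirdOrderJacobsthalRec_iff.mpr hrec
  have hbinet := isSolution_thirdOrderJacobsthalRec_linearCombination
    ((2 + Complex.I) / 7) ((1 - 3 * Complex.I) / 7) (-(2 + Complex.I) / 7)
  have hJg_eq := ((thirdOrderJacobsthalRec ℂ).eq_iff_eqOn_range_order _ _ hJg hbinet).mpr <| by
    intro k hk
    have : k < 3 := Finset.mem_range.mp hk
    interval_cases k <;>
      simp only [h0, h1, h2, Omg, Nat.reduceAdd, Nat.reduceMod, Nat.reduceEqDiff, reduceIte] <;>
      push_cast <;> ring
  intro n
  rw [hJg_eq]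
  ring
end

section
/- For every natural number n ≥ 0, Jg(n) + Jg(n+1) + Jg(n+2) = (a+b+c)·(1 + i/2)·2^n. -/
/-- The characteristic polynomial factors as `X³ - X² - X - 2 = (X - 2)(X² + X + 1)`, and the
three-term sum is the `X² + X + 1` part, so it obeys the recurrence of `X - 2`. -/
theorem sum_three_consecutive_eq_two_pow_mul {R : Type*} [CommSemiring R] {x : ℕ → R}
    (hrec : ∀ n, x (n + 3) = x (n + 2) + x (n + 1) + 2 * x n) (n : ℕ) :
    x n + x (n + 1) + x (n + 2) = 2 ^ n * (x 0 + x 1 + x 2) := by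
  induction n with
  | zero => ring
  | succ n ih => rw [hrec, pow_succ, mul_right_comm, ← ih]; ring

theorem generalized_gaussian_third_order_jacobsthal_three_term_sum
    (a b c : ℝ) (Jg : ℕ → ℂ)
    (h0 : Jg 0 = (a : ℂ) + ((c - b - a) / 2 : ℝ) * Complex.I)
    (h1 : Jg 1 = (b : ℂ) + (a : ℝ) * Complex.I)
    (h2 : Jg 2 = (c : ℂ) + (b : ℝ) * Complex.I)
    (hrec : ∀ n : ℕ, Jg (n + 3) = Jg (n + 2) + Jg (n + 1) + 2 * Jg n) :
    ∀ n : ℕ, Jg n + Jg (n + 1) + Jg (n + 2) = ((a : ℂ) + b + c) * (1 + Complex.I / 2) * 2 ^ n := by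
  intro n
  rw [sum_three_consecutive_eq_two_pow_mul hrec n, h0, h1, h2]
  push_cast
  ring
end
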